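/- Let m ≥ 3 be an odd natural number and let ρ be an m×m positive semidefinite complex matrix with Tr(ρ) = 1 (a density matrix). Define g(ρ) = 1 − (2/(m+1))·Tr(ρ^{(m+1)/2}) − ∑_{i=1}^{(m−1)/2} [ (4i/(m+1)²)·Tr(ρ^i) + ((2m−4i+2)/(m+1)²)·Tr(ρ^{(m+1)/2+i}) ]. Then g(ρ) ≥ 0, and g(ρ) = 0 if and only if ρ is a pure state, i.e. ρ² = ρ. -/

import Mathlib

open ComplexOrder Matrix

lemma conj_pow_aux {m : ℕ} (U D : Matrix (Fin m) (Fin m) ℂ) (h1 : U * star U = 1)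
    (h2 : star U * U = 1) (k : ℕ) : (U * D * star U) ^ k = U * D ^ k * star U := by
  induction k with
  | zero => simp [h1]
  | succ n ih =>
    rw [pow_succ, ih, pow_succ]
    calc U * D ^ n * star U * (U * D * star U)
        = U * D ^ n * (star U * U) * D * star U := by
          simp only [Matrix.mul_assoc]
      _ = U * (D ^ n * D) * star U := by rw [h2]; simp only [Matrix.mul_assoc, Matrix.mul_one]

lemma trace_pow_eq {m : ℕ} (ρ : Matrix (Fin m) (Fin m) ℂ) (hρ : ρ.IsHermitian) (k : ℕ) :
    (ρ ^ k).trace = ∑ j, ((hρ.eigenvalues j : ℂ)) ^ k := by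
  have h2 : star (hρ.eigenvectorUnitary : Matrix (Fin m) (Fin m) ℂ) * hρ.eigenvectorUnitary = 1 :=
    (Matrix.mem_unitaryGroup_iff').mp hρ.eigenvectorUnitary.2
  have h1 : (hρ.eigenvectorUnitary : Matrix (Fin m) (Fin m) ℂ) * star hρ.eigenvectorUnitary = 1 :=
    (Matrix.mem_unitaryGroup_iff).mp hρ.eigenvectorUnitary.2
  conv_lhs => rw [hρ.spectral_theorem, Unitary.conjStarAlgAut_apply]
  rw [conj_pow_aux _ _ h1 h2, trace_mul_cycle, h2,
    Matrix.one_mul, diagonal_pow, trace_diagonal]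
  simp

lemma coef_sum (m n : ℕ) (hn : m = 2 * n + 1) :
    ∑ i ∈ Finset.Icc 1 n, ((4 * (i : ℝ)) / ((m : ℝ) + 1) ^ 2 +
      (2 * (m : ℝ) - 4 * i + 2) / ((m : ℝ) + 1) ^ 2) = 1 - 2 / ((m : ℝ) + 1) := by
  have hm0 : ((m : ℝ) + 1) ≠ 0 := by positivity
  have : ∀ i ∈ Finset.Icc 1 n, ((4 * (i : ℝ)) / ((m : ℝ) + 1) ^ 2 +
      (2 * (m : ℝ) - 4 * i + 2) / ((m : ℝ) + 1) ^ 2) = 2 / ((m : ℝ) + 1) := by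
    intro i _
    field_simp
    ring
  rw [Finset.sum_congr rfl this, Finset.sum_const, Nat.card_Icc]
  field_simp
  subst hn
  push_cast
  rw [nsmul_eq_mul]
  field_simp
  ring


/-- The function `g` of the paper (odd `m`):
`g(ρ) = 1 − (2/(m+1))·Tr(ρ^{(m+1)/2})
        − ∑_{i=1}^{(m−1)/2} [ (4i/(m+1)²)·Tr(ρ^i)
          + ((2m−4i+2)/(m+1)²)·Tr(ρ^{(m+1)/2+i}) ]`. -/
noncomputable def gOdd (m : ℕ) (ρ : Matrix (Fin m) (Fin m) ℂ) : ℝ :=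
  1 - (2 / ((m : ℝ) + 1)) * ((ρ ^ ((m + 1) / 2)).trace).re
    - ∑ i ∈ Finset.Icc 1 ((m - 1) / 2),
      ((4 * (i : ℝ)) / ((m : ℝ) + 1) ^ 2 * ((ρ ^ i).trace).re +
       (2 * (m : ℝ) - 4 * i + 2) / ((m : ℝ) + 1) ^ 2 *
         ((ρ ^ ((m + 1) / 2 + i)).trace).re)

/-- For an odd `m ≥ 3` and an `m×m` density matrix `ρ`, one has `g(ρ) ≥ 0`,
with equality if and only if `ρ` is a pure state (`ρ² = ρ`). -/
theorem gOdd_nonneg_eq_zero_iff_pure (m : ℕ) (hm : 3 ≤ m) (hmo : Odd m)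
    (ρ : Matrix (Fin m) (Fin m) ℂ) (hρ : ρ.PosSemidef) (htr : ρ.trace = 1) :
    0 ≤ gOdd m ρ ∧ (gOdd m ρ = 0 ↔ ρ ^ 2 = ρ) := by
  obtain ⟨n, hn⟩ := hmo
  have hn1 : 1 ≤ n := by omega
  have hs : (m + 1) / 2 = n + 1 := by omega
  have hn' : (m - 1) / 2 = n := by omega
  set L := hρ.1.eigenvalues with hL
  have hLnn : ∀ j, 0 ≤ L j := fun j => hρ.eigenvalues_nonneg j
  -- real trace of powers
  have hT : ∀ k, ((ρ ^ k).trace).re = ∑ j, (L j) ^ k := by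
    intro k
    rw [trace_pow_eq ρ hρ.1 k, Complex.re_sum]
    exact Finset.sum_congr rfl fun j _ => by rw [← Complex.ofReal_pow, Complex.ofReal_re]
  have hsum1 : ∑ j, L j = 1 := by
    have h := hT 1
    rw [pow_one, htr] at h
    simpa using h.symm
  have hLle1 : ∀ j, L j ≤ 1 := by
    intro j
    rw [← hsum1]
    exact Finset.single_le_sum (fun i _ => hLnn i) (Finset.mem_univ j)
  have hpowle : ∀ (k : ℕ), 1 ≤ k → ∀ j, (L j) ^ k ≤ L j := by
    intro k hk j
    calc (L j) ^ k ≤ (L j) ^ 1 := pow_le_pow_of_le_one (hLnn j) (hLle1 j) hk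
      _ = L j := pow_one _
  have hTle : ∀ (k : ℕ), 1 ≤ k → ((ρ ^ k).trace).re ≤ 1 := by
    intro k hk
    rw [hT, ← hsum1]
    exact Finset.sum_le_sum fun j _ => hpowle k hk j
  have hme : (1:ℝ) ≤ (m:ℝ) := by exact_mod_cast (by omega : 1 ≤ m)
  have hm0 : (0:ℝ) < (m : ℝ) + 1 := by linarith
  -- each summand bounded by a_i + b_i
  have hsumle : ∑ i ∈ Finset.Icc 1 ((m - 1) / 2),
      ((4 * (i : ℝ)) / ((m : ℝ) + 1) ^ 2 * ((ρ ^ i).trace).re +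
       (2 * (m : ℝ) - 4 * i + 2) / ((m : ℝ) + 1) ^ 2 *
         ((ρ ^ ((m + 1) / 2 + i)).trace).re)
      ≤ ∑ i ∈ Finset.Icc 1 ((m - 1) / 2),
      ((4 * (i : ℝ)) / ((m : ℝ) + 1) ^ 2 +
       (2 * (m : ℝ) - 4 * i + 2) / ((m : ℝ) + 1) ^ 2) := by
    apply Finset.sum_le_sum
    intro i hi
    rw [Finset.mem_Icc, hn'] at hi
    have ha : (0:ℝ) ≤ (4 * (i : ℝ)) / ((m : ℝ) + 1) ^ 2 := by positivity
    have hib : (i : ℝ) ≤ n := by exact_mod_cast hi.2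
    have hmn : (m : ℝ) = 2 * n + 1 := by exact_mod_cast congrArg (Nat.cast : ℕ → ℝ) hn
    have hb : (0:ℝ) ≤ (2 * (m : ℝ) - 4 * i + 2) / ((m : ℝ) + 1) ^ 2 := by
      apply div_nonneg _ (by positivity)
      rw [hmn]; linarith
    have h1 : (4 * (i : ℝ)) / ((m : ℝ) + 1) ^ 2 * ((ρ ^ i).trace).re
        ≤ (4 * (i : ℝ)) / ((m : ℝ) + 1) ^ 2 := by
      nth_rewrite 2 [← mul_one ((4 * (i : ℝ)) / ((m : ℝ) + 1) ^ 2)]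
      exact mul_le_mul_of_nonneg_left (hTle i hi.1) ha
    have h2 : (2 * (m : ℝ) - 4 * i + 2) / ((m : ℝ) + 1) ^ 2 * ((ρ ^ ((m + 1) / 2 + i)).trace).re
        ≤ (2 * (m : ℝ) - 4 * i + 2) / ((m : ℝ) + 1) ^ 2 := by
      nth_rewrite 2 [← mul_one ((2 * (m : ℝ) - 4 * i + 2) / ((m : ℝ) + 1) ^ 2)]
      exact mul_le_mul_of_nonneg_left (hTle _ (by omega)) hb
    linarith
  have hcoef := coef_sum m n hn
  rw [hn'] at hsumle
  -- the key lower bound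
  have hkey : 2 / ((m : ℝ) + 1) * (1 - ((ρ ^ ((m + 1) / 2)).trace).re) ≤ gOdd m ρ := by
    unfold gOdd
    rw [hn']
    rw [hcoef] at hsumle
    nlinarith [hsumle]
  have hTs := hTle ((m + 1) / 2) (by omega)
  have hc0 : (0:ℝ) < 2 / ((m : ℝ) + 1) := by positivity
  have hnng : 0 ≤ gOdd m ρ := le_trans (by nlinarith) hkey
  refine ⟨hnng, ?_, ?_⟩
  · -- g = 0 → pure
    intro hg0
    have hTs1 : ((ρ ^ ((m + 1) / 2)).trace).re = 1 := by nlinarith [hkey]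
    rw [hT] at hTs1
    have hpt : ∀ j ∈ Finset.univ, (L j) ^ ((m + 1) / 2) = L j := by
      rw [← Finset.sum_eq_sum_iff_of_le (fun j _ => hpowle _ (by omega) j)]
      rw [hTs1, hsum1]
    have hL2 : ∀ j, (L j) ^ 2 = L j := by
      intro j
      have h := hpt j (Finset.mem_univ j)
      rcases eq_or_lt_of_le (hLnn j) with h0 | h0
      · rw [← h0]; ring
      rcases lt_trichotomy (L j) 1 with h1 | h1 | h1
      · exfalso
        have : (L j) ^ ((m + 1) / 2) < (L j) ^ 1 :=
          pow_lt_pow_right_of_lt_one₀ h0 h1 (by omega)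
        rw [pow_one, h] at this
        exact lt_irrefl _ this
      · rw [h1]; norm_num
      · linarith [hLle1 j]
    -- matrix identity
    have h2 : star (hρ.1.eigenvectorUnitary : Matrix (Fin m) (Fin m) ℂ) * hρ.1.eigenvectorUnitary = 1 :=
      (Matrix.mem_unitaryGroup_iff').mp hρ.1.eigenvectorUnitary.2
    have h1 : (hρ.1.eigenvectorUnitary : Matrix (Fin m) (Fin m) ℂ) * star hρ.1.eigenvectorUnitary = 1 :=
      (Matrix.mem_unitaryGroup_iff).mp hρ.1.eigenvectorUnitary.2
    have hD2 : diagonal (RCLike.ofReal ∘ L) ^ 2 = diagonal (RCLike.ofReal ∘ L : Fin m → ℂ) := by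
      have harg : ((RCLike.ofReal ∘ L : Fin m → ℂ)) ^ 2 = (RCLike.ofReal ∘ L : Fin m → ℂ) := by
        funext j
        show ((L j : ℂ)) ^ 2 = (L j : ℂ)
        rw [← Complex.ofReal_pow, hL2 j]
      rw [diagonal_pow, harg]
    conv_lhs => rw [hρ.1.spectral_theorem, Unitary.conjStarAlgAut_apply]
    rw [conj_pow_aux _ _ h1 h2, hD2, ← Unitary.conjStarAlgAut_apply (S := ℂ), ← hρ.1.spectral_theorem]
  · -- pure → g = 0
    intro hpure
    have hpow : ∀ k, 1 ≤ k → ρ ^ k = ρ := by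
      intro k hk
      induction k with
      | zero => omega
      | succ j ih =>
        rcases Nat.eq_or_lt_of_le hk with h | h
        · rw [← h, pow_one]
        · rw [pow_succ, ih (by omega), ← pow_two, hpure]
    have hTre : ∀ k, 1 ≤ k → ((ρ ^ k).trace).re = 1 := by
      intro k hk; rw [hpow k hk, htr]; exact Complex.one_re
    unfold gOdd
    rw [hn', hTre _ (by omega)]
    have : ∑ i ∈ Finset.Icc 1 n,
      ((4 * (i : ℝ)) / ((m : ℝ) + 1) ^ 2 * ((ρ ^ i).trace).re +
       (2 * (m : ℝ) - 4 * i + 2) / ((m : ℝ) + 1) ^ 2 *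
         ((ρ ^ ((m + 1) / 2 + i)).trace).re)
      = ∑ i ∈ Finset.Icc 1 n,
      ((4 * (i : ℝ)) / ((m : ℝ) + 1) ^ 2 +
       (2 * (m : ℝ) - 4 * i + 2) / ((m : ℝ) + 1) ^ 2) := by
      apply Finset.sum_congr rfl
      intro i hi
      rw [Finset.mem_Icc] at hi
      rw [hTre i hi.1, hTre _ (by omega)]
      ring
    rw [this, hcoef]
    ring
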